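/- Let n ≥ 1 be an integer, K ≥ 0 a real number, and q : ZMod n → ℝ a function such that for every a ∈ ZMod n and every natural number m, both q(a) − q(a + m) ≤ K·m and q(a) − q(a − m) ≤ K·m (where m is cast into ZMod n). Let σ_1 ≥ σ_2 ≥ … ≥ σ_n be the values of q listed in non-increasing order. Then for every p with 1 ≤ p ≤ n, σ_1 − σ_p ≤ K · ⌊p/2⌋. -/
import Mathlib


/-- **Counting argument** (from the proof of Lemma A.1): if a function `q` on the cyclic index
set `ZMod n` satisfies `q a − q (a ± m) ≤ K·m` for every index `a` and every step `m`, then its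
`p`-th largest value is within `K·⌊p/2⌋` of its maximum. -/
theorem cyclic_lipschitz_sorted_gap (n : ℕ) (hn : 1 ≤ n) (K : ℝ) (hK : 0 ≤ K)
    (q : ZMod n → ℝ)
    (hq : ∀ (a : ZMod n) (m : ℕ),
      q a - q (a + (m : ZMod n)) ≤ K * m ∧ q a - q (a - (m : ZMod n)) ≤ K * m)
    (σ : Fin n → ℝ) (e : Fin n ≃ ZMod n)
    (hσ : ∀ i : Fin n, σ i = q (e i)) (hsort : Antitone σ) :
    ∀ p : ℕ, ∀ _hp1 : 1 ≤ p, ∀ _hpn : p ≤ n,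
      σ ⟨0, by omega⟩ - σ ⟨p - 1, by omega⟩ ≤ K * (p / 2 : ℕ) := by
  intro p hp1 hpn
  haveI : NeZero n := ⟨by omega⟩
  set h := p / 2 with hh
  have hhn : h + 1 ≤ n := by omega
  set j : ZMod n := e ⟨0, by omega⟩ with hj
  have castinj : ∀ x y : ℕ, x < n → y < n → (x : ZMod n) = (y : ZMod n) → x = y := by
    intro x y hx hy hxy
    have := congrArg ZMod.val hxy
    rwa [ZMod.val_cast_of_lt hx, ZMod.val_cast_of_lt hy] at this
  set A : Finset (ZMod n) := (Finset.range (h+1)).image (fun m : ℕ => j + (m : ZMod n)) with hA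
  set B : Finset (ZMod n) := (Finset.range (h+1)).image (fun m : ℕ => j - (m : ZMod n)) with hB
  have cardA : A.card = h + 1 := by
    rw [hA, Finset.card_image_of_injOn, Finset.card_range]
    intro x hx y hy hxy
    simp only [Finset.mem_coe, Finset.mem_range] at hx hy
    exact castinj x y (by omega) (by omega) (add_left_cancel hxy)
  have cardB : B.card = h + 1 := by
    rw [hB, Finset.card_image_of_injOn, Finset.card_range]
    intro x hx y hy hxy
    simp only [Finset.mem_coe, Finset.mem_range] at hx hy
    have h2 : (x : ZMod n) = (y : ZMod n) := by linear_combination -hxy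
    exact castinj x y (by omega) (by omega) h2
  -- intersection is contained in a small explicit set
  have hinter : (A ∩ B) ⊆ {j, j + (h : ZMod n)} := by
    intro a ha
    rw [Finset.mem_inter] at ha
    obtain ⟨haA, haB⟩ := ha
    rw [hA, Finset.mem_image] at haA
    rw [hB, Finset.mem_image] at haB
    obtain ⟨x, hx, rfl⟩ := haA
    obtain ⟨y, hy, hxy⟩ := haB
    rw [Finset.mem_range] at hx hy
    have hsum : ((x + y : ℕ) : ZMod n) = 0 := by
      push_cast
      linear_combination -hxy
    have hdvd : n ∣ x + y := (ZMod.natCast_eq_zero_iff _ _).mp hsum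
    have hxy2 : x + y ≤ 2 * h := by omega
    rcases Nat.eq_zero_or_pos (x + y) with h0 | hpos
    · have : x = 0 := by omega
      subst this
      simp [Finset.mem_insert]
    · have hn_le : n ≤ x + y := Nat.le_of_dvd hpos hdvd
      have hxh : x = h := by omega
      subst hxh
      simp [Finset.mem_insert]
  have cardinter : (A ∩ B).card ≤ 2 :=
    le_trans (Finset.card_le_card hinter) (Finset.card_insert_le _ _)
  have cardT : p ≤ (A ∪ B).card := by
    have hu := Finset.card_union_add_card_inter A B
    rcases Nat.even_or_odd p with hpe | hpo
    · -- p = 2h, intersection ≤ 2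
      have : p = 2 * h := by
        obtain ⟨k, hk⟩ := hpe; omega
      omega
    · -- p = 2h+1 : intersection ⊆ {j}
      have hpodd : p = 2 * h + 1 := by
        obtain ⟨k, hk⟩ := hpo; omega
      have hinter1 : (A ∩ B) ⊆ {j} := by
        intro a ha
        rw [Finset.mem_inter] at ha
        obtain ⟨haA, haB⟩ := ha
        rw [hA, Finset.mem_image] at haA
        rw [hB, Finset.mem_image] at haB
        obtain ⟨x, hx, rfl⟩ := haA
        obtain ⟨y, hy, hxy⟩ := haB
        rw [Finset.mem_range] at hx hy
        have hsum : ((x + y : ℕ) : ZMod n) = 0 := by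
          push_cast
          linear_combination -hxy
        have hdvd : n ∣ x + y := (ZMod.natCast_eq_zero_iff _ _).mp hsum
        have hx0 : x = 0 := by
          rcases Nat.eq_zero_or_pos (x + y) with h0 | hpos
          · omega
          · have := Nat.le_of_dvd hpos hdvd; omega
        subst hx0
        simp
      have h1 : (A ∩ B).card ≤ 1 :=
        le_trans (Finset.card_le_card hinter1) (by simp)
      omega
  -- every element of A ∪ B has q-value close to q j
  have hTq : ∀ a ∈ A ∪ B, q j - q a ≤ K * h := by
    intro a ha
    rw [Finset.mem_union] at ha
    have key : ∀ m : ℕ, m ≤ h → K * m ≤ K * h := by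
      intro m hm
      exact mul_le_mul_of_nonneg_left (by exact_mod_cast hm) hK
    rcases ha with ha | ha
    · rw [hA, Finset.mem_image] at ha
      obtain ⟨m, hm, rfl⟩ := ha
      rw [Finset.mem_range] at hm
      exact le_trans (hq j m).1 (key m (by omega))
    · rw [hB, Finset.mem_image] at ha
      obtain ⟨m, hm, rfl⟩ := ha
      rw [Finset.mem_range] at hm
      exact le_trans (hq j m).2 (key m (by omega))
  -- pull back to Fin n
  set S : Finset (Fin n) := (A ∪ B).image e.symm with hS
  have cardS : p ≤ S.card := by
    rw [hS, Finset.card_image_of_injective _ e.symm.injective]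
    exact cardT
  -- find an element of S with large index
  have hex : ∃ i ∈ S, p - 1 ≤ i.val := by
    by_contra hcon
    push_neg at hcon
    have hsub : S.image Fin.val ⊆ Finset.range (p - 1) := by
      intro v hv
      rw [Finset.mem_image] at hv
      obtain ⟨i, hi, rfl⟩ := hv
      rw [Finset.mem_range]
      exact hcon i hi
    have := Finset.card_le_card hsub
    rw [Finset.card_image_of_injective _ Fin.val_injective, Finset.card_range] at this
    omega
  obtain ⟨i, hiS, hip⟩ := hex
  have hmono : σ ⟨p - 1, by omega⟩ ≥ σ i := by
    apply hsort
    exact hip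
  rw [hS, Finset.mem_image] at hiS
  obtain ⟨a, haT, hia⟩ := hiS
  have hqa : q j - q a ≤ K * h := hTq a haT
  have hσi : σ i = q a := by
    rw [hσ i, ← hia, Equiv.apply_symm_apply]
  have hσ0 : σ ⟨0, by omega⟩ = q j := by rw [hσ]
  have : σ ⟨0, by omega⟩ - σ ⟨p - 1, by omega⟩ ≤ K * h := by
    rw [hσ0]
    calc q j - σ ⟨p - 1, by omega⟩ ≤ q j - σ i := by linarith
    _ = q j - q a := by rw [hσi]
    _ ≤ K * h := hqa
  exact this
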